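/- Let p > 1, d > 0, l ≥ 0, and define f(t) = (1/(1-p))((t+d)^{1-p} - (l+d)^{1-p}) for t ∈ [0, l]. Then for all 0 ≤ b < a ≤ l: ((a-b)/(a+d))^p ≤ |log(a+d) - log(b+d)|^p ≤ (a-b)^{p-1}(f(a) - f(b)). -/

import Mathlib

/-!
Since `log (a + d) - log (b + d) = ∫_b^a (x + d)⁻¹ dx`, the lower bound is `log y ≥ 1 - y⁻¹`
at `y = (a + d) / (b + d)`, and the upper bound is Jensen's inequality for the convex map `y ↦ y ^ p`
applied to the average of `(x + d)⁻¹` over `[b, a]`: the integral of `(x + d) ^ (-p)` over `[b, a]`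
is exactly `f a - f b`.
-/

open MeasureTheory Real Set

/-- Jensen's inequality for `y ↦ y ^ p` on an interval, with the averages cleared. -/
theorem rpow_intervalIntegral_le_mul_intervalIntegral_rpow {g : ℝ → ℝ} {p a b : ℝ} (hp : 1 ≤ p)
    (hab : a < b) (hg : ContinuousOn g (Icc a b)) (hg_nonneg : ∀ x ∈ Icc a b, 0 ≤ g x) :
    (∫ x in a..b, g x) ^ p ≤ (b - a) ^ (p - 1) * ∫ x in a..b, g x ^ p := by
  have hba : 0 < b - a := sub_pos.2 hab
  have hvol : volume (Ioc a b) = ENNReal.ofReal (b - a) := volume_Ioc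
  have hjensen : (⨍ x in Ioc a b, g x) ^ p ≤ ⨍ x in Ioc a b, g x ^ p :=
    (convexOn_rpow hp).map_set_average_le
      (fun y hy => (continuousAt_rpow_const y p (Or.inr (by linarith))).continuousWithinAt)
      isClosed_Ici (by simp [hvol, hab]) (by simp [hvol])
      ((ae_restrict_mem measurableSet_Ioc).mono fun x hx => hg_nonneg x (Ioc_subset_Icc_self hx))
      ((hg.integrableOn_Icc).mono_set Ioc_subset_Icc_self)
      (((hg.rpow_const fun _ _ => Or.inr (by linarith)).integrableOn_Icc).mono_set
        Ioc_subset_Icc_self)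
  have hint_nonneg : 0 ≤ ∫ x in Ioc a b, g x :=
    setIntegral_nonneg measurableSet_Ioc fun x hx => hg_nonneg x (Ioc_subset_Icc_self hx)
  rw [setAverage_eq, setAverage_eq, measureReal_def, hvol, ENNReal.toReal_ofReal hba.le,
    smul_eq_mul, smul_eq_mul, mul_rpow (inv_nonneg.2 hba.le) hint_nonneg,
    inv_rpow hba.le] at hjensen
  rw [intervalIntegral.integral_of_le hab.le, intervalIntegral.integral_of_le hab.le]
  calc (∫ x in Ioc a b, g x) ^ p
      = (b - a) ^ p * (((b - a) ^ p)⁻¹ * (∫ x in Ioc a b, g x) ^ p) := by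
        field_simp
    _ ≤ (b - a) ^ p * ((b - a)⁻¹ * ∫ x in Ioc a b, g x ^ p) := by gcongr
    _ = (b - a) ^ (p - 1) * ∫ x in Ioc a b, g x ^ p := by
        rw [rpow_sub_one hba.ne']
        ring

theorem integral_inv_add_const {a b d : ℝ} (ha : 0 < a + d) (hb : 0 < b + d) :
    ∫ x in b..a, (x + d)⁻¹ = log (a + d) - log (b + d) := by
  rw [intervalIntegral.integral_comp_add_right (fun x => x⁻¹), integral_inv_of_pos hb ha,
    log_div ha.ne' hb.ne']

theorem integral_inv_add_const_rpow {p a b d : ℝ} (hp : p ≠ 1) (hba : b ≤ a) (hb : 0 < b + d) :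
    ∫ x in b..a, ((x + d)⁻¹) ^ p = ((a + d) ^ (1 - p) - (b + d) ^ (1 - p)) / (1 - p) := by
  have hpos : ∀ x ∈ uIcc (b + d) (a + d), 0 < x := fun x hx => by
    rw [uIcc_of_le (by linarith)] at hx
    exact hb.trans_le hx.1
  rw [intervalIntegral.integral_comp_add_right (fun x => (x⁻¹) ^ p),
    intervalIntegral.integral_congr (g := fun x => x ^ (-p)) fun x hx => by
      simp only [inv_rpow (hpos x hx).le, rpow_neg (hpos x hx).le],
    integral_rpow (Or.inr ⟨fun h => hp (by linarith), fun h => (hpos 0 h).false⟩)]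
  ring_nf

theorem stmt_14_general (p d l a b : ℝ) (hp : 1 < p) (hd : 0 < d)
    (hb : 0 ≤ b) (hba : b < a) :
    ((a - b) / (a + d)) ^ p ≤ |Real.log (a + d) - Real.log (b + d)| ^ p ∧
      |Real.log (a + d) - Real.log (b + d)| ^ p ≤
        (a - b) ^ (p - 1) *
          ((1 / (1 - p)) * ((a + d) ^ (1 - p) - (l + d) ^ (1 - p)) -
            (1 / (1 - p)) * ((b + d) ^ (1 - p) - (l + d) ^ (1 - p))) := by
  have hbd : 0 < b + d := by linarith
  have had : 0 < a + d := by linarith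
  have hlog : (a - b) / (a + d) ≤ log (a + d) - log (b + d) := by
    have := one_sub_inv_le_log_of_pos (div_pos had hbd)
    rw [log_div had.ne' hbd.ne', inv_div] at this
    rwa [show (a - b) / (a + d) = 1 - (b + d) / (a + d) by field_simp; ring]
  have hlog_nonneg : 0 ≤ log (a + d) - log (b + d) :=
    (div_nonneg (by linarith) had.le).trans hlog
  rw [abs_of_nonneg hlog_nonneg]
  refine ⟨rpow_le_rpow (div_nonneg (by linarith) had.le) hlog (by linarith), ?_⟩
  have hjensen := rpow_intervalIntegral_le_mul_intervalIntegral_rpow (g := fun x => (x + d)⁻¹)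
    hp.le hba (ContinuousOn.inv₀ (by fun_prop) fun x hx => (hbd.trans_le (by linarith [hx.1])).ne')
    fun x hx => inv_nonneg.2 (by linarith [hx.1])
  rw [integral_inv_add_const had hbd, integral_inv_add_const_rpow hp.ne' hba.le hbd] at hjensen
  convert hjensen using 2
  ring

/-- Logarithmic-case algebraic inequality (`γ = 0`, `β = -(p-1)`): with
`f(t) = (1/(1-p))((t+d)^(1-p) - (l+d)^(1-p))` on `[0, l]`, for `0 ≤ b < a ≤ l`,
`((a-b)/(a+d))^p ≤ |log(a+d) - log(b+d)|^p ≤ (a-b)^(p-1)(f(a) - f(b))`. -/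
theorem stmt_14 (p d l a b : ℝ) (hp : 1 < p) (hd : 0 < d) (hl : 0 ≤ l)
    (hb : 0 ≤ b) (hba : b < a) (hal : a ≤ l) :
    ((a - b) / (a + d)) ^ p ≤ |Real.log (a + d) - Real.log (b + d)| ^ p ∧
      |Real.log (a + d) - Real.log (b + d)| ^ p ≤
        (a - b) ^ (p - 1) *
          ((1 / (1 - p)) * ((a + d) ^ (1 - p) - (l + d) ^ (1 - p)) -
            (1 / (1 - p)) * ((b + d) ^ (1 - p) - (l + d) ^ (1 - p))) :=
  stmt_14_general p d l a b hp hd hb hba
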